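/- Let a > 0 be a real number and let C = t² + 1 + εa(𝐢 + 𝐣t) ∈ 𝔻ℍ[t] (the circular translation with radius a). For all real numbers f, g, setting h₁ = 𝐤 − ε(f𝐢 + (a + g)𝐣) and h₂ = −𝐤 + ε(f𝐢 + g𝐣), the linear polynomials t − h₁ and t − h₂ are motion polynomials and C = (t − h₁)(t − h₂). In particular, C admits infinitely many distinct factorizations into products of two monic linear motion polynomials. -/

import Mathlib

noncomputable section
open Polynomial

/-- The real quaternions ℍ. -/
abbrev Quat := Quaternion ℝ

/-- The dual quaternions 𝔻ℍ = ℍ ⊕ εℍ, realized as dual numbers over ℍ.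
An element is a pair `(p, q)` representing `p + εq`. -/
abbrev DQ := DualNumber Quat

/-- Conjugation of a dual quaternion `p + εq ↦ p̄ + εq̄`,
conjugating each quaternion part. -/
def dconj (h : DQ) : DQ := (star h.fst, star h.snd)

/-- The canonical ring homomorphism ℝ → 𝔻ℍ. -/
def realToDQ : ℝ →+* DQ := (TrivSqZeroExt.inlHom Quat Quat).comp (algebraMap ℝ Quat)

/-- Coefficientwise conjugate of a polynomial over 𝔻ℍ. -/
def pconj (C : DQ[X]) : DQ[X] := C.sum fun n a => Polynomial.C (dconj a) * X ^ n

/-- `C ∈ 𝔻ℍ[t]` is a motion polynomial if `C C̄ ∈ ℝ[t] \ {0}` and the leading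
coefficient of `C` is invertible. -/
def IsMotionPoly (C : DQ[X]) : Prop :=
  (∃ R : ℝ[X], R ≠ 0 ∧ C * pconj C = R.map realToDQ) ∧ IsUnit C.leadingCoeff

/-- The action of a dual quaternion `p + εq` (with `p ≠ 0` and satisfying the Study
condition) on a pure quaternion `x`:  `x ↦ (p x p̄ + p q̄ − q p̄)/N(p)`. -/
def act (p q x : Quat) : Quat :=
  (p * x * star p + p * star q - q * star p) * (p * star p)⁻¹

/-- The dual quaternion `p + εq` from its primal part `p` and dual part `q`. -/
def dq (p q : Quat) : DQ := (p, q)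

/-- The imaginary unit 𝐢 of ℍ. -/
def qi : Quat := ⟨0, 1, 0, 0⟩
/-- The imaginary unit 𝐣 of ℍ. -/
def qj : Quat := ⟨0, 0, 1, 0⟩
/-- The imaginary unit 𝐤 of ℍ. -/
def qk : Quat := ⟨0, 0, 0, 1⟩

/-!
For `h = p + εq` with `p`, `q` pure, `p² = -1` and `pq + qp = 0` one has `h + h̄ = 0` and
`h h̄ = 1`, so `(t - h)(t - h̄) = t² + 1` and `t - h` is a motion polynomial. Both `h₁` and `h₂`
are of this form with `p = ±𝐤`, and `h₁ + h₂ = -εa𝐣`, `h₁ h₂ = 1 + εa𝐢` are exactly the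
coefficients of `C`. The dual part of `h₂` recovers `f`, so distinct `f` give distinct
factorizations.
-/

open Quaternion

lemma X_sub_C_mul_X_sub_C {R : Type*} [Ring R] (a b : R) :
    (X - C a) * (X - C b) = X ^ 2 - C (a + b) * X + C (a * b) := by
  rw [sub_mul, mul_sub, mul_sub, X_mul_C, C_add, C_mul, add_mul, sq]
  abel

@[simp] lemma qi_re : qi.re = 0 := rfl
@[simp] lemma qi_imI : qi.imI = 1 := rfl
@[simp] lemma qi_imJ : qi.imJ = 0 := rfl
@[simp] lemma qi_imK : qi.imK = 0 := rfl
@[simp] lemma qj_re : qj.re = 0 := rfl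
@[simp] lemma qj_imI : qj.imI = 0 := rfl
@[simp] lemma qj_imJ : qj.imJ = 1 := rfl
@[simp] lemma qj_imK : qj.imK = 0 := rfl
@[simp] lemma qk_re : qk.re = 0 := rfl
@[simp] lemma qk_imI : qk.imI = 0 := rfl
@[simp] lemma qk_imJ : qk.imJ = 0 := rfl
@[simp] lemma qk_imK : qk.imK = 1 := rfl

@[simp] lemma fst_dq (p q : Quat) : (dq p q).fst = p := rfl
@[simp] lemma snd_dq (p q : Quat) : (dq p q).snd = q := rfl
@[simp] lemma fst_dconj (h : DQ) : (dconj h).fst = star h.fst := rfl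
@[simp] lemma snd_dconj (h : DQ) : (dconj h).snd = star h.snd := rfl

@[simp] lemma dconj_zero : dconj 0 = 0 := TrivSqZeroExt.ext (star_zero _) (star_zero _)
@[simp] lemma dconj_one : dconj 1 = 1 := TrivSqZeroExt.ext (star_one _) (star_zero _)
@[simp] lemma dconj_neg (h : DQ) : dconj (-h) = -dconj h :=
  TrivSqZeroExt.ext (star_neg _) (star_neg _)
@[simp] lemma dconj_add (a b : DQ) : dconj (a + b) = dconj a + dconj b :=
  TrivSqZeroExt.ext (star_add _ _) (star_add _ _)

lemma pconj_X_sub_C (h : DQ) : pconj (X - C h) = X - C (dconj h) := by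
  rw [pconj, sub_eq_add_neg, ← C_neg, sum_add_index, sum_X_index, sum_C_index] <;>
    simp [add_mul, sub_eq_add_neg]

lemma isMotionPoly_X_sub_C_of_real {h : DQ} {r s : ℝ} (hr : h + dconj h = realToDQ r)
    (hs : h * dconj h = realToDQ s) : IsMotionPoly (X - C h) := by
  refine ⟨⟨X ^ 2 - C r * X + C s, ?_, ?_⟩, by simp [(monic_X_sub_C h).leadingCoeff]⟩
  · exact Monic.ne_zero (by monicity!)
  · rw [pconj_X_sub_C, X_sub_C_mul_X_sub_C, hr, hs]
    simp

lemma dq_add_dconj {p q : Quat} (hp : star p = -p) (hq : star q = -q) :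
    dq p q + dconj (dq p q) = 0 := by
  apply TrivSqZeroExt.ext <;> simp [hp, hq]

lemma dq_mul_dconj {p q : Quat} (hp : star p = -p) (hq : star q = -q) (hpp : p * p = -1)
    (hpq : p * q + q * p = 0) : dq p q * dconj (dq p q) = 1 := by
  apply TrivSqZeroExt.ext <;> simp [hp, hq, hpp]
  linear_combination (norm := noncomm_ring) -hpq

lemma isMotionPoly_X_sub_C_dq {p q : Quat} (hp : star p = -p) (hq : star q = -q)
    (hpp : p * p = -1) (hpq : p * q + q * p = 0) : IsMotionPoly (X - C (dq p q)) :=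
  isMotionPoly_X_sub_C_of_real (r := 0) (s := 1) (by rw [map_zero, dq_add_dconj hp hq])
    (by rw [map_one, dq_mul_dconj hp hq hpp hpq])

lemma isMotionPoly_X_sub_C_dq_qk {q : Quat} (hre : q.re = 0) (hk : q.imK = 0) :
    IsMotionPoly (X - C (dq qk q)) := by
  apply isMotionPoly_X_sub_C_dq <;> ext <;> simp [hre, hk]

lemma isMotionPoly_X_sub_C_dq_neg_qk {q : Quat} (hre : q.re = 0) (hk : q.imK = 0) :
    IsMotionPoly (X - C (dq (-qk) q)) := by
  apply isMotionPoly_X_sub_C_dq <;> ext <;> simp [hre, hk]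

lemma circTranslation_eq_mul (a f g : ℝ) :
    X ^ 2 + 1 + C (dq 0 (a • qi)) + C (dq 0 (a • qj)) * X
      = (X - C (dq qk (-(f • qi + (a + g) • qj)))) * (X - C (dq (-qk) (f • qi + g • qj))) := by
  have hsum : dq qk (-(f • qi + (a + g) • qj)) + dq (-qk) (f • qi + g • qj) = -dq 0 (a • qj) := by
    apply TrivSqZeroExt.ext <;> simp
    module
  have hprod : dq qk (-(f • qi + (a + g) • qj)) * dq (-qk) (f • qi + g • qj)
      = 1 + dq 0 (a • qi) := by
    apply TrivSqZeroExt.ext <;> ext <;> simp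
  rw [X_sub_C_mul_X_sub_C, hsum, hprod, C_neg, C_add, C_1, neg_mul, sub_neg_eq_add]
  abel

theorem stmt17_general (a : ℝ) :
    (∀ f g : ℝ,
      IsMotionPoly (X - Polynomial.C (dq qk (-(f • qi + (a + g) • qj)))) ∧
      IsMotionPoly (X - Polynomial.C (dq (-qk) (f • qi + g • qj))) ∧
      X ^ 2 + 1 + Polynomial.C (dq 0 (a • qi)) + Polynomial.C (dq 0 (a • qj)) * X
        = (X - Polynomial.C (dq qk (-(f • qi + (a + g) • qj)))) *
          (X - Polynomial.C (dq (-qk) (f • qi + g • qj)))) ∧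
    {hp : DQ × DQ |
        IsMotionPoly (X - Polynomial.C hp.1) ∧ IsMotionPoly (X - Polynomial.C hp.2) ∧
        X ^ 2 + 1 + Polynomial.C (dq 0 (a • qi)) + Polynomial.C (dq 0 (a • qj)) * X
          = (X - Polynomial.C hp.1) * (X - Polynomial.C hp.2)}.Infinite := by
  have factorization (f g : ℝ) :=
    And.intro (isMotionPoly_X_sub_C_dq_qk (q := -(f • qi + (a + g) • qj)) (by simp) (by simp))
      (And.intro (isMotionPoly_X_sub_C_dq_neg_qk (q := f • qi + g • qj) (by simp) (by simp))
        (circTranslation_eq_mul a f g))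
  refine ⟨factorization, Set.infinite_of_injective_forall_mem (f := fun f : ℝ =>
    (dq qk (-(f • qi + (a + 0) • qj)), dq (-qk) (f • qi + (0 : ℝ) • qj))) ?_ (factorization · 0)⟩
  intro f f' h
  simpa using congrArg (fun hp => hp.2.snd.imI) h

/-- For a > 0 and `C = t² + 1 + εa(𝐢 + 𝐣t)` (circular translation of
radius a), for all real f, g the dual quaternions `h₁ = 𝐤 − ε(f𝐢 + (a+g)𝐣)` and
`h₂ = −𝐤 + ε(f𝐢 + g𝐣)` give monic linear motion polynomials with
`C = (t − h₁)(t − h₂)`; in particular C admits infinitely many distinct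
factorizations into products of two monic linear motion polynomials. -/
theorem stmt17 (a : ℝ) (ha : 0 < a) :
    (∀ f g : ℝ,
      IsMotionPoly (X - Polynomial.C (dq qk (-(f • qi + (a + g) • qj)))) ∧
      IsMotionPoly (X - Polynomial.C (dq (-qk) (f • qi + g • qj))) ∧
      X ^ 2 + 1 + Polynomial.C (dq 0 (a • qi)) + Polynomial.C (dq 0 (a • qj)) * X
        = (X - Polynomial.C (dq qk (-(f • qi + (a + g) • qj)))) *
          (X - Polynomial.C (dq (-qk) (f • qi + g • qj)))) ∧
    {hp : DQ × DQ |
        IsMotionPoly (X - Polynomial.C hp.1) ∧ IsMotionPoly (X - Polynomial.C hp.2) ∧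
        X ^ 2 + 1 + Polynomial.C (dq 0 (a • qi)) + Polynomial.C (dq 0 (a • qj)) * X
          = (X - Polynomial.C hp.1) * (X - Polynomial.C hp.2)}.Infinite :=
  stmt17_general a
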